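/- Polignac result for arithmetic progressions in the sieve: let g be even, Q the product of the distinct primes dividing g, q_m the largest prime factor of g, and j ≥ 1 such that every prime ≤ j + 1 divides g. Then the number of γ ∈ {1,...,q_m#} such that γ, γ + g, ..., γ + j·g are all coprime to q_m# equals φ(Q) · ∏_{p prime, p ≤ q_m, p ∤ Q} (p - j - 1). -/
import Mathlib

open Finset

private lemma prodIsUnit {M N : Type*} [Monoid M] [Monoid N] (x : M × N) :
    IsUnit x ↔ IsUnit x.1 ∧ IsUnit x.2 := by
  constructor
  · intro h
    exact ⟨h.map (MonoidHom.fst M N), h.map (MonoidHom.snd M N)⟩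
  · rintro ⟨⟨u, hu⟩, ⟨v, hv⟩⟩
    exact ⟨⟨((u : M), (v : N)), ((↑u⁻¹ : M), (↑v⁻¹ : N)), by ext <;> simp, by ext <;> simp⟩, by
      simp [Prod.ext_iff, hu, hv]⟩

private noncomputable def sieveCount (g j n : ℕ) : ℕ :=
  Nat.card {x : ZMod n // ∀ i ≤ j, IsUnit (x + ((i * g : ℕ) : ZMod n))}

private lemma sieveCount_one (g j : ℕ) : sieveCount g j 1 = 1 := by
  have h : ∀ x : ZMod 1, ∀ i ≤ j, IsUnit (x + ((i * g : ℕ) : ZMod 1)) := by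
    intro x i _; exact isUnit_of_subsingleton _
  unfold sieveCount
  have : Unique {x : ZMod 1 // ∀ i ≤ j, IsUnit (x + ((i * g : ℕ) : ZMod 1))} :=
    ⟨⟨⟨0, h 0⟩⟩, fun a => Subtype.ext (Subsingleton.elim _ _)⟩
  exact Nat.card_unique

private lemma sieveCount_mul (g j m n : ℕ) (h : m.Coprime n) :
    sieveCount g j (m * n) = sieveCount g j m * sieveCount g j n := by
  unfold sieveCount
  set e := ZMod.chineseRemainder h with he
  have key : ∀ x : ZMod (m * n), (∀ i ≤ j, IsUnit (x + ((i * g : ℕ) : ZMod (m * n)))) ↔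
      ((∀ i ≤ j, IsUnit ((e x).1 + ((i * g : ℕ) : ZMod m))) ∧
       (∀ i ≤ j, IsUnit ((e x).2 + ((i * g : ℕ) : ZMod n)))) := by
    intro x
    rw [← forall₂_and]
    refine forall₂_congr fun i hi => ?_
    have h1 : IsUnit (x + ((i * g : ℕ) : ZMod (m * n))) ↔
        IsUnit (e (x + ((i * g : ℕ) : ZMod (m * n)))) :=
      ⟨fun hu => hu.map e.toRingHom, fun hu => by simpa using hu.map e.symm.toRingHom⟩
    rw [h1, map_add, map_natCast, prodIsUnit]
    simp
  calc Nat.card {x : ZMod (m * n) // ∀ i ≤ j, IsUnit (x + ((i * g : ℕ) : ZMod (m * n)))}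
      = Nat.card {y : ZMod m × ZMod n //
          (∀ i ≤ j, IsUnit (y.1 + ((i * g : ℕ) : ZMod m))) ∧
          (∀ i ≤ j, IsUnit (y.2 + ((i * g : ℕ) : ZMod n)))} :=
        Nat.card_congr (e.toEquiv.subtypeEquiv fun x => (key x))
    _ = _ := by
        rw [Nat.card_congr (Equiv.subtypeProdEquivProd
          (p := fun a : ZMod m => ∀ i ≤ j, IsUnit (a + ((i * g : ℕ) : ZMod m)))
          (q := fun b : ZMod n => ∀ i ≤ j, IsUnit (b + ((i * g : ℕ) : ZMod n)))), Nat.card_prod]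

private lemma sieveCount_prime_dvd (g j p : ℕ) (hp : p.Prime) (hpg : p ∣ g) :
    sieveCount g j p = p - 1 := by
  haveI : Fact p.Prime := ⟨hp⟩
  have hg0 : (g : ZMod p) = 0 := (ZMod.natCast_eq_zero_iff g p).mpr hpg
  have hc : ∀ i : ℕ, ((i * g : ℕ) : ZMod p) = 0 := by
    intro i; push_cast; rw [hg0, mul_zero]
  have key : ∀ x : ZMod p, (∀ i ≤ j, IsUnit (x + ((i * g : ℕ) : ZMod p))) ↔ ¬ (x = 0) := by
    intro x
    constructor
    · intro h
      have := h 0 (Nat.zero_le j)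
      rw [hc 0, add_zero, isUnit_iff_ne_zero] at this
      exact this
    · intro hx i _
      rw [hc i, add_zero, isUnit_iff_ne_zero]
      exact hx
  classical
  unfold sieveCount
  rw [Nat.card_eq_fintype_card]
  rw [Fintype.card_congr (Equiv.subtypeEquiv (q := fun x : ZMod p => ¬ (x = 0))
    (Equiv.refl _) (fun x => key x))]
  rw [Fintype.card_subtype_compl, Fintype.card_subtype_eq (0 : ZMod p), ZMod.card]

private lemma sieveCount_prime_not_dvd (g j p : ℕ) (hp : p.Prime) (hpg : ¬ p ∣ g)
    (hjp : j < p) : sieveCount g j p = p - j - 1 := by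
  haveI : Fact p.Prime := ⟨hp⟩
  classical
  have hgu : IsUnit (g : ZMod p) := by
    rw [ZMod.isUnit_iff_coprime]
    exact (Nat.coprime_comm.mp ((Nat.Prime.coprime_iff_not_dvd hp).mpr hpg))
  set T : Finset (ZMod p) := (range (j + 1)).image (fun i => -((i * g : ℕ) : ZMod p)) with hT
  have key : ∀ x : ZMod p, (∀ i ≤ j, IsUnit (x + ((i * g : ℕ) : ZMod p))) ↔ ¬ (x ∈ T) := by
    intro x
    constructor
    · intro h hx
      rw [hT, mem_image] at hx
      obtain ⟨i, hi, hix⟩ := hx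
      rw [mem_range, Nat.lt_succ_iff] at hi
      have := h i hi
      rw [← hix, neg_add_cancel, isUnit_iff_ne_zero] at this
      exact this rfl
    · intro h i hi
      rw [isUnit_iff_ne_zero]
      intro h0
      apply h
      rw [hT, mem_image]
      exact ⟨i, mem_range.mpr (Nat.lt_succ_iff.mpr hi),
        by rw [neg_eq_iff_add_eq_zero, add_comm]; exact h0⟩
  have hTcard : T.card = j + 1 := by
    rw [hT, Finset.card_image_of_injOn, Finset.card_range]
    intro a ha b hb hab
    simp only [Finset.mem_coe, mem_range, Nat.lt_succ_iff] at ha hb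
    simp only [neg_inj] at hab
    push_cast at hab
    have : (a : ZMod p) = b := hgu.mul_right_cancel hab
    have ha' := ZMod.val_cast_of_lt (lt_of_le_of_lt ha hjp)
    have hb' := ZMod.val_cast_of_lt (lt_of_le_of_lt hb hjp)
    rw [← ha', ← hb', this]
  unfold sieveCount
  rw [Nat.card_eq_fintype_card]
  rw [Fintype.card_congr (Equiv.subtypeEquiv (q := fun x : ZMod p => ¬ (x ∈ T))
    (Equiv.refl _) (fun x => key x))]
  rw [Fintype.card_subtype_compl]
  have : Fintype.card {x : ZMod p // x ∈ T} = T.card := Fintype.card_coe T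
  rw [this, hTcard, ZMod.card]
  omega

private lemma coprime_prod_primes {a : ℕ} (ha : a.Prime) (F : Finset ℕ)
    (hF : ∀ p ∈ F, p.Prime) (haF : a ∉ F) : a.Coprime (∏ p ∈ F, p) :=
  Nat.Coprime.prod_right fun q hq =>
    (Nat.coprime_primes ha (hF q hq)).mpr (fun h => haF (h ▸ hq))

private lemma sieveCount_prod (g j : ℕ) (F : Finset ℕ) (hF : ∀ p ∈ F, p.Prime) :
    sieveCount g j (∏ p ∈ F, p) = ∏ p ∈ F, sieveCount g j p := by
  induction F using Finset.induction_on with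
  | empty => simpa using sieveCount_one g j
  | @insert a F haF ih =>
    rw [prod_insert haF, prod_insert haF,
      sieveCount_mul g j a _ (coprime_prod_primes (hF a (mem_insert_self a F)) F
        (fun p hp => hF p (mem_insert_of_mem hp)) haF),
      ih (fun p hp => hF p (mem_insert_of_mem hp))]

private lemma totient_prod_primes (F : Finset ℕ) (hF : ∀ p ∈ F, p.Prime) :
    Nat.totient (∏ p ∈ F, p) = ∏ p ∈ F, (p - 1) := by
  induction F using Finset.induction_on with
  | empty => simp
  | @insert a F haF ih =>
    rw [prod_insert haF, prod_insert haF,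
      Nat.totient_mul (coprime_prod_primes (hF a (mem_insert_self a F)) F
        (fun p hp => hF p (mem_insert_of_mem hp)) haF),
      Nat.totient_prime (hF a (mem_insert_self a F)),
      ih (fun p hp => hF p (mem_insert_of_mem hp))]

private lemma filter_card_eq_sieveCount (g j N : ℕ) (hN : 0 < N) :
    ((Finset.Icc 1 N).filter
      (fun γ => ∀ i ≤ j, Nat.Coprime (γ + i * g) N)).card = sieveCount g j N := by
  classical
  haveI : NeZero N := ⟨hN.ne'⟩
  have hmem : ∀ γ : ℕ, (∀ i ≤ j, Nat.Coprime (γ + i * g) N) ↔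
      (∀ i ≤ j, IsUnit ((γ : ZMod N) + ((i * g : ℕ) : ZMod N))) := by
    intro γ
    refine forall₂_congr fun i hi => ?_
    rw [← ZMod.isUnit_iff_coprime]
    push_cast
    rfl
  rw [show ((Finset.Icc 1 N).filter
      (fun γ => ∀ i ≤ j, Nat.Coprime (γ + i * g) N)).card
      = Nat.card {γ : ℕ // γ ∈ (Finset.Icc 1 N).filter
        (fun γ => ∀ i ≤ j, Nat.Coprime (γ + i * g) N)} by
    rw [Nat.card_eq_fintype_card, Fintype.card_coe]]
  unfold sieveCount
  apply Nat.card_congr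
  refine Equiv.ofBijective (fun γ => ⟨((γ : ℕ) : ZMod N), ?_⟩) ⟨?_, ?_⟩
  · have h := γ.2
    rw [mem_filter] at h
    exact (hmem γ.1).mp h.2
  · rintro ⟨γ₁, h₁⟩ ⟨γ₂, h₂⟩ h
    simp only [Subtype.mk.injEq] at h ⊢
    rw [mem_filter, Finset.mem_Icc] at h₁ h₂
    have hmod : γ₁ % N = γ₂ % N := (ZMod.natCast_eq_natCast_iff' γ₁ γ₂ N).mp h
    rcases eq_or_lt_of_le h₁.1.2 with hA | hA <;>
      rcases eq_or_lt_of_le h₂.1.2 with hB | hB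
    · omega
    · rw [hA, Nat.mod_self, Nat.mod_eq_of_lt hB] at hmod; omega
    · rw [hB, Nat.mod_self, Nat.mod_eq_of_lt hA] at hmod; omega
    · rw [Nat.mod_eq_of_lt hA, Nat.mod_eq_of_lt hB] at hmod; exact hmod
  · rintro ⟨x, hx⟩
    refine ⟨⟨if x = 0 then N else x.val, ?_⟩, ?_⟩
    · rw [mem_filter, Finset.mem_Icc]
      by_cases h0 : x = 0
      · simp only [h0, if_pos rfl]
        refine ⟨⟨hN, le_refl N⟩, ?_⟩
        rw [hmem]
        simpa [h0] using hx
      · simp only [if_neg h0]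
        have hval : x.val < N := ZMod.val_lt x
        have hvalpos : 0 < x.val := by
          rcases Nat.eq_zero_or_pos x.val with h | h
          · exact absurd ((ZMod.val_eq_zero x).mp h) h0
          · exact h
        refine ⟨⟨hvalpos, hval.le⟩, ?_⟩
        rw [hmem, ZMod.natCast_zmod_val]
        exact hx
    · apply Subtype.ext
      by_cases h0 : x = 0
      · simp [h0, ZMod.natCast_self]
      · simp [h0, ZMod.natCast_zmod_val]

/-- Polignac result for arithmetic progressions in the sieve: for g even with radical Q,
largest prime factor q_m, and feasible repetition length j (every prime ≤ j+1 divides g),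
the number of progressions γ, γ+g, ..., γ+jg of units mod q_m# equals
φ(Q) · ∏_{p ≤ q_m, p ∤ Q} (p - j - 1). -/
theorem stmt_17 (g j : ℕ) (hg2 : 2 ∣ g) (hg1 : 1 < g) (hj : 1 ≤ j)
    (hfeas : ∀ q : ℕ, q.Prime → q ≤ j + 1 → q ∣ g) :
    let Q := ∏ q ∈ g.primeFactors, q
    let qm := g.primeFactors.max' (Nat.nonempty_primeFactors.mpr hg1)
    ((Finset.Icc 1 (primorial qm)).filter
      (fun γ => ∀ i ≤ j, Nat.Coprime (γ + i * g) (primorial qm))).card =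
    Nat.totient Q *
      ∏ p ∈ (Finset.range (qm + 1)).filter (fun p => p.Prime ∧ ¬ p ∣ Q), (p - j - 1) := by
  intro Q qm
  classical
  have hg0 : g ≠ 0 := by omega
  have hQ : Q = ∏ q ∈ g.primeFactors, q := rfl
  -- p ∣ Q ↔ p ∣ g for primes p
  have hdvdQ : ∀ p : ℕ, p.Prime → (p ∣ Q ↔ p ∣ g) := by
    intro p hp
    rw [hQ]
    constructor
    · intro h
      obtain ⟨q, hq, hpq⟩ := (Prime.dvd_finset_prod_iff hp.prime _).mp h
      rw [Nat.prime_dvd_prime_iff_eq hp (Nat.prime_of_mem_primeFactors hq)] at hpq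
      exact hpq ▸ Nat.dvd_of_mem_primeFactors hq
    · intro h
      exact Finset.dvd_prod_of_mem _ (Nat.mem_primeFactors.mpr ⟨hp, h, hg0⟩)
  set F : Finset ℕ := (Finset.range (qm + 1)).filter Nat.Prime with hF
  have hFprime : ∀ p ∈ F, p.Prime := fun p hp => (mem_filter.mp hp).2
  have hprimor : primorial qm = ∏ p ∈ F, p := rfl
  have hsplit : F.filter (fun p => p ∣ g) = g.primeFactors := by
    ext p
    simp only [hF, mem_filter, mem_range, Nat.mem_primeFactors]
    constructor
    · rintro ⟨⟨_, hp⟩, hdvd⟩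
      exact ⟨hp, hdvd, hg0⟩
    · rintro ⟨hp, hdvd, _⟩
      have : p ∈ g.primeFactors := Nat.mem_primeFactors.mpr ⟨hp, hdvd, hg0⟩
      exact ⟨⟨Nat.lt_succ_of_le (g.primeFactors.le_max' p this), hp⟩, hdvd⟩
  rw [filter_card_eq_sieveCount g j (primorial qm) (primorial_pos qm),
    hprimor, sieveCount_prod g j F hFprime,
    ← Finset.prod_filter_mul_prod_filter_not F (fun p => p ∣ g) (sieveCount g j)]
  congr 1
  · rw [hsplit, hQ, totient_prod_primes g.primeFactors
      (fun p hp => Nat.prime_of_mem_primeFactors hp)]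
    exact Finset.prod_congr rfl fun p hp =>
      sieveCount_prime_dvd g j p (Nat.prime_of_mem_primeFactors hp)
        (Nat.dvd_of_mem_primeFactors hp)
  · have hsets : F.filter (fun p => ¬ p ∣ g)
        = (Finset.range (qm + 1)).filter (fun p => p.Prime ∧ ¬ p ∣ Q) := by
      rw [hF, Finset.filter_filter]
      exact Finset.filter_congr fun p _ => by
        constructor
        · rintro ⟨hp, h⟩; exact ⟨hp, fun hc => h ((hdvdQ p hp).mp hc)⟩
        · rintro ⟨hp, h⟩; exact ⟨hp, fun hc => h ((hdvdQ p hp).mpr hc)⟩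
    rw [← hsets]
    refine Finset.prod_congr rfl fun p hp => ?_
    rw [mem_filter] at hp
    have hpp := hFprime p hp.1
    have hjp : j < p := by
      by_contra hle
      exact hp.2 (hfeas p hpp (by omega))
    exact sieveCount_prime_not_dvd g j p hpp hp.2 hjp
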